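/- Stable Voting satisfies stability for winners with tiebreaking: for every election profile P with at least two candidates, if some candidate is stable for SV in P, then some candidate that is stable for SV in P is a Stable Voting winner in P. -/
import Mathlib

set_option maxHeartbeats 1000000


/-- An election profile: a finite set of candidates and, for each voter,
a strict linear order (ballot) on the candidates.  `ballot v a b = true`
means that voter `v` ranks candidate `a` above candidate `b`. -/
structure Profile (C V : Type) [DecidableEq C] [Fintype V] where
  cands : Finset C
  ballot : V → C → C → Bool
  ballot_irrefl : ∀ v a, a ∈ cands → ballot v a a = false
  ballot_asymm_total : ∀ v a b, a ∈ cands → b ∈ cands → a ≠ b →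
    (ballot v a b = true ↔ ¬ ballot v b a = true)
  ballot_trans : ∀ v a b c, a ∈ cands → b ∈ cands → c ∈ cands →
    ballot v a b = true → ballot v b c = true → ballot v a c = true

variable {C V : Type} [DecidableEq C] [Fintype V]

/-- The margin of `a` vs. `b`: the number of voters ranking `a` above `b`
minus the number of voters ranking `b` above `a`. -/
def Profile.margin (P : Profile C V) (a b : C) : ℤ :=
  ((Finset.univ.filter fun v => P.ballot v a b = true).card : ℤ) -
  ((Finset.univ.filter fun v => P.ballot v b a = true).card : ℤ)

/-- The restriction of a profile to a subset `S` of the candidates. -/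
def Profile.restrict (P : Profile C V) (S : Finset C) : Profile C V where
  cands := P.cands ∩ S
  ballot := P.ballot
  ballot_irrefl := fun v a ha => P.ballot_irrefl v a (Finset.mem_inter.mp ha).1
  ballot_asymm_total := fun v a b ha hb => P.ballot_asymm_total v a b
    (Finset.mem_inter.mp ha).1 (Finset.mem_inter.mp hb).1
  ballot_trans := fun v a b c ha hb hc => P.ballot_trans v a b c
    (Finset.mem_inter.mp ha).1 (Finset.mem_inter.mp hb).1 (Finset.mem_inter.mp hc).1

/-- The profile `P₋B` obtained from `P` by removing candidate `b` from all ballots. -/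
def Profile.remove (P : Profile C V) (b : C) : Profile C V :=
  P.restrict (P.cands.erase b)

/-- Auxiliary, fuel-based definition of the Stable Voting winners. -/
def SVaux : ℕ → Profile C V → Set C
  | 0, P => ↑P.cands
  | n + 1, P =>
    if P.cands.card ≤ 1 then ↑P.cands
    else { a | ∃ b ∈ P.cands, b ≠ a ∧ a ∈ SVaux n (P.remove b) ∧
      ∀ x ∈ P.cands, ∀ y ∈ P.cands, x ≠ y → x ∈ SVaux n (P.remove y) →
        P.margin x y ≤ P.margin a b }

/-- The set of Stable Voting winners of a profile.  If there is a single
candidate, that candidate wins; otherwise `a` is a winner iff there is a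
candidate `b ≠ a` such that `a` is a Stable Voting winner after removing `b`
and the margin of `a` vs. `b` is maximal among margins of pairs `(x, y)` of
distinct candidates such that `x` is a Stable Voting winner after removing `y`. -/
def SV (P : Profile C V) : Set C := SVaux P.cands.card P

/-- `a` beats `b` head-to-head: the margin of `a` vs. `b` is positive. -/
def Profile.beats (P : Profile C V) (a b : C) : Prop := 0 < P.margin a b

/-- A Condorcet winner: a candidate beating every other candidate head-to-head. -/
def CondorcetWinner (P : Profile C V) (a : C) : Prop :=
  a ∈ P.cands ∧ ∀ b ∈ P.cands, b ≠ a → P.beats a b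

/-- `S` is a nonempty set of candidates each of whose members beats each
nonmember head-to-head. -/
def Dominant (P : Profile C V) (S : Finset C) : Prop :=
  S ⊆ P.cands ∧ S.Nonempty ∧ ∀ a ∈ S, ∀ b ∈ P.cands, b ∉ S → P.beats a b

/-- `S` is the Smith set of `P`: the smallest nonempty set of candidates each
of whose members beats each nonmember head-to-head. -/
def IsSmith (P : Profile C V) (S : Finset C) : Prop :=
  Dominant P S ∧ ∀ T, Dominant P T → S ⊆ T

/-- A profile is uniquely weighted if distinct ordered pairs of distinct
candidates have distinct margins. -/
def UniquelyWeighted (P : Profile C V) : Prop :=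
  ∀ a b a' b', a ∈ P.cands → b ∈ P.cands → a' ∈ P.cands → b' ∈ P.cands →
    a ≠ b → a' ≠ b' → (a, b) ≠ (a', b') → P.margin a b ≠ P.margin a' b'

/-- `a` is stable for SV in `P`: there is a candidate `b` whom `a` beats
head-to-head such that `a` is a Stable Voting winner in `P₋b`. -/
def StableFor (P : Profile C V) (a : C) : Prop :=
  ∃ b ∈ P.cands, P.beats a b ∧ a ∈ SV (P.remove b)

lemma Profile.remove_cands (P : Profile C V) {b : C} (hb : b ∈ P.cands) :
    (P.remove b).cands = P.cands.erase b := by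
  simp [Profile.remove, Profile.restrict, Finset.inter_eq_right.mpr (Finset.erase_subset _ _)]

/-- Stable Voting satisfies stability for winners with
tiebreaking: if some candidate is stable for SV in `P`, then some candidate
stable for SV in `P` is a Stable Voting winner in `P`. -/
theorem sv_stability_for_winners_with_tiebreaking (P : Profile C V)
    (h2 : 2 ≤ P.cands.card) (h : ∃ A ∈ P.cands, StableFor P A) :
    ∃ A ∈ P.cands, StableFor P A ∧ A ∈ SV P := by
  classical
  obtain ⟨A, hA, bA, hbA, hbeat, hSVA⟩ := h
  have hAne : A ≠ bA := by
    intro he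
    rw [he] at hbeat
    have hz : P.margin bA bA = 0 := sub_self _
    exact absurd hbeat (by rw [Profile.beats, hz]; exact lt_irrefl 0)
  set n := P.cands.card - 1 with hn
  have hcard : P.cands.card = n + 1 := by omega
  have hSVr : ∀ b ∈ P.cands, SV (P.remove b) = SVaux n (P.remove b) := by
    intro b hb
    rw [SV, P.remove_cands hb, Finset.card_erase_of_mem hb]
  let F : Finset (C × C) := (P.cands ×ˢ P.cands).filter
    (fun p => p.1 ≠ p.2 ∧ p.1 ∈ SV (P.remove p.2))
  have hAF : (A, bA) ∈ F := by
    simp only [F, Finset.mem_filter, Finset.mem_product]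
    exact ⟨⟨hA, hbA⟩, hAne, hSVA⟩
  obtain ⟨p, hpF, hmax⟩ := F.exists_max_image (fun p => P.margin p.1 p.2) ⟨_, hAF⟩
  obtain ⟨a, b⟩ := p
  simp only [F, Finset.mem_filter, Finset.mem_product] at hpF
  obtain ⟨⟨ha, hb⟩, hab, haSV⟩ := hpF
  have hmAb : P.margin A bA ≤ P.margin a b := hmax _ hAF
  have hpos : 0 < P.margin a b := lt_of_lt_of_le hbeat hmAb
  refine ⟨a, ha, ⟨b, hb, hpos, haSV⟩, ?_⟩
  rw [SV, hcard]
  simp only [SVaux, Set.mem_setOf_eq]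
  rw [if_neg (by omega)]
  refine ⟨b, hb, hab.symm, (hSVr b hb) ▸ haSV, ?_⟩
  intro x hx y hy hxy hxSV
  refine hmax (x, y) ?_
  simp only [F, Finset.mem_filter, Finset.mem_product]
  exact ⟨⟨hx, hy⟩, hxy, (hSVr y hy).symm ▸ hxSV⟩
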